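/- Let P be a finite PIP whose crossing complex Δ_P admits a proper r-colouring κ: P → {1,…,r} (meaning κ assigns different colours to any two distinct elements that are consistent and incomparable). Define κ_c mapping each consistent downset I to the vector w ∈ {0,1}^r with w_j = (number of elements of I of colour j) mod 2. Then for any face C(I,M) of ⊞_P, the restriction of κ_c to the vertex set {I \ N : N ⊆ M} is injective, and its image is a face of the cube {0,1}^r, namely the set of vectors agreeing with κ_c(I \ M) in all coordinates j not in κ(M) and arbitrary in coordinates in κ(M). -/

import Mathlib

/-!
The elements of `M` are maximal in the consistent set `I`, so they form a consistent antichain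
and `κ` is injective on `M`. Hence removing `N ⊆ M` from `I` flips the parity of exactly the
colours in `κ(N)`, each once: `κ_c(I \ N) = κ_c(I) + 𝟙_{κ(N)}` over `ZMod 2`. Since
`N ↦ 𝟙_{κ(N)}` is a bijection from the subsets of `M` onto the vectors supported on `κ(M)`, the
vertices of `C(I,M)` map injectively onto the translate of that coordinate subspace by `κ_c(I)`.
-/

open Finset

variable {P : Type*} [Fintype P] [DecidableEq P] [PartialOrder P]

/-- A subset is consistent if it contains no inconsistent pair. -/
def Consistent (incons : P → P → Prop) (S : Finset P) : Prop :=
  ∀ a ∈ S, ∀ b ∈ S, ¬ incons a b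

/-- A downset (order ideal). -/
def IsDownset (I : Finset P) : Prop :=
  ∀ x ∈ I, ∀ y, y ≤ x → y ∈ I

open Classical in
/-- The maximal elements of a finite set. -/
noncomputable def maxElems (I : Finset P) : Finset P :=
  I.filter (fun x => ∀ y ∈ I, ¬ x < y)

open Classical in
/-- The downset generated by a set. -/
noncomputable def downGen (A : Finset P) : Finset P :=
  Finset.univ.filter (fun x => ∃ a ∈ A, x ≤ a)

/-- A consistent antichain: the faces of the crossing complex `Δ_P`. -/
def ConsAntichain (incons : P → P → Prop) (A : Finset P) : Prop :=
  (∀ a ∈ A, ∀ b ∈ A, a ≠ b → ¬ a ≤ b) ∧ Consistent incons A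

/-- A face of the cubical complex `⊞_P`: a pair (I, M) with I a consistent
downset and M ⊆ max I. -/
def IsFace (incons : P → P → Prop) (I M : Finset P) : Prop :=
  IsDownset I ∧ Consistent incons I ∧ M ⊆ maxElems I

/-- The face-containment order on faces of `⊞_P`:
`C(I',M') ⊆ C(I,M)` iff `M' ⊆ M` and `I \ M ⊆ I' ⊆ I`. -/
def FaceLE (p q : Finset P × Finset P) : Prop :=
  p.2 ⊆ q.2 ∧ q.1 \ q.2 ⊆ p.1 ∧ p.1 ⊆ q.1

/-- The cubical colouring induced by a colouring `κ` of the crossing complex: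
a downset `I` is sent to the vector whose `j`-th coordinate is the parity of
the number of elements of `I` of colour `j`. -/
def cubeColour {r : ℕ} (κ : P → Fin r) (S : Finset P) : Fin r → ZMod 2 :=
  fun j => ((S.filter (fun y => κ y = j)).card : ZMod 2)

lemma ConsAntichain.injOn {α : Type*} [PartialOrder α] {incons : α → α → Prop} {A : Finset α}
    (hA : ConsAntichain incons A) {r : ℕ} {κ : α → Fin r}
    (hκ : ∀ a b : α, a ≠ b → ¬ incons a b → ¬ a ≤ b → ¬ b ≤ a → κ a ≠ κ b) :
    Set.InjOn κ A := by
  intro a ha b hb hab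
  by_contra hne
  exact hκ a b hne (hA.2 a ha b hb) (hA.1 a ha b hb hne) (hA.1 b hb a ha (Ne.symm hne)) hab

lemma mem_maxElems {I : Finset P} {x : P} : x ∈ maxElems I ↔ x ∈ I ∧ ∀ y ∈ I, ¬ x < y := by
  classical
  rw [maxElems, mem_filter]

lemma consAntichain_of_subset_maxElems {incons : P → P → Prop} {I M : Finset P}
    (hI : Consistent incons I) (hM : M ⊆ maxElems I) : ConsAntichain incons M := by
  have hmax : ∀ m ∈ M, m ∈ I ∧ ∀ y ∈ I, ¬ m < y := fun m hm => mem_maxElems.mp (hM hm)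
  refine ⟨fun a ha b hb hne hle => (hmax a ha).2 b (hmax b hb).1 (hle.lt_of_ne hne), ?_⟩
  exact fun a ha b hb => hI a (hmax a ha).1 b (hmax b hb).1

section ParityColouring

variable {α : Type*} {r : ℕ} {κ : α → Fin r}

lemma cubeColour_sdiff [DecidableEq α] {I N : Finset α} (hNI : N ⊆ I) :
    cubeColour κ (I \ N) = cubeColour κ I + cubeColour κ N := by
  funext j
  have hcard : #((I \ N).filter (κ · = j)) + #(N.filter (κ · = j)) = #(I.filter (κ · = j)) := by
    rw [← card_union_of_disjoint (disjoint_filter_filter sdiff_disjoint), ← filter_union,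
      sdiff_union_of_subset hNI]
  rw [Pi.add_apply, ← CharTwo.add_eq_iff_eq_add]
  simp only [cubeColour]
  rw [← Nat.cast_add, hcard]

lemma cubeColour_of_injOn {N : Finset α} (hN : Set.InjOn κ N) (j : Fin r) :
    cubeColour κ N j = if j ∈ N.image κ then 1 else 0 := by
  have hcard : #(N.filter (κ · = j)) = #((N.image κ).filter (· = j)) := by
    rw [filter_image, card_image_of_injOn (hN.mono (filter_subset _ _))]
  rw [cubeColour, hcard, filter_eq']
  split_ifs <;> simp

lemma cubeColour_injOn_powerset {M : Finset α} (hM : Set.InjOn κ M) :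
    Set.InjOn (cubeColour κ) {N | N ⊆ M} := by
  intro N hN N' hN' h
  have himage : N.image κ = N'.image κ := by
    ext j
    have hj := congrFun h j
    rw [cubeColour_of_injOn (hM.mono hN), cubeColour_of_injOn (hM.mono hN')] at hj
    split_ifs at hj with hjN hjN' hjN'
    exacts [iff_of_true hjN hjN', absurd hj (by decide), absurd hj (by decide),
      iff_of_false hjN hjN']
  rw [← coe_inj, ← hM.image_eq_image_iff (coe_subset.mpr hN) (coe_subset.mpr hN'), ← coe_image,
    ← coe_image, himage]

lemma cubeColour_image_powerset {M : Finset α} (hM : Set.InjOn κ M) :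
    cubeColour κ '' {N | N ⊆ M} = {v | ∀ j ∉ M.image κ, v j = 0} := by
  ext v
  constructor
  · rintro ⟨N, hN, rfl⟩ j hj
    rw [cubeColour_of_injOn (hM.mono hN), if_neg fun h => hj (image_subset_image hN h)]
  · intro hv
    refine ⟨M.filter (fun m => v (κ m) = 1), filter_subset _ _, funext fun j => ?_⟩
    rw [cubeColour_of_injOn (hM.mono (filter_subset _ _)), ← filter_image (p := fun i => v i = 1)]
    simp only [mem_filter]
    by_cases hj : j ∈ M.image κ
    · have hbool : ∀ x : ZMod 2, x = 0 ∨ x = 1 := by decide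
      rcases hbool (v j) with h | h <;> simp [hj, h]
    · simp [hj, hv j hj]

end ParityColouring

theorem colouring_cubical_from_crossing_general (incons : P → P → Prop)
    (r : ℕ) (κ : P → Fin r)
    (hκ : ∀ a b : P, a ≠ b → ¬ incons a b → ¬ a ≤ b → ¬ b ≤ a → κ a ≠ κ b)
    (I M : Finset P) (hface : IsFace incons I M) :
    (∀ N ⊆ M, ∀ N' ⊆ M,
        cubeColour κ (I \ N) = cubeColour κ (I \ N') → I \ N = I \ N') ∧
    ({w : Fin r → ZMod 2 | ∃ N ⊆ M, w = cubeColour κ (I \ N)} =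
      {w : Fin r → ZMod 2 | ∀ j : Fin r,
        j ∉ M.image κ → w j = cubeColour κ (I \ M) j}) := by
  obtain ⟨-, hcons, hmax⟩ := hface
  have hMI : M ⊆ I := fun m hm => (mem_maxElems.mp (hmax hm)).1
  have hinj : Set.InjOn κ M := (consAntichain_of_subset_maxElems hcons hmax).injOn hκ
  have hsdiff : ∀ N ⊆ M, cubeColour κ (I \ N) = cubeColour κ I + cubeColour κ N :=
    fun N hN => cubeColour_sdiff (hN.trans hMI)
  constructor
  · intro N hN N' hN' h
    rw [hsdiff N hN, hsdiff N' hN', add_right_inj] at h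
    rw [cubeColour_injOn_powerset hinj hN hN' h]
  · have hbase : ∀ j ∉ M.image κ, cubeColour κ (I \ M) j = cubeColour κ I j := fun j hj => by
      rw [hsdiff M Subset.rfl, Pi.add_apply, cubeColour_of_injOn hinj, if_neg hj, add_zero]
    ext w
    have hshift := Set.ext_iff.mp (cubeColour_image_powerset hinj) (w - cubeColour κ I)
    simp only [Set.mem_image, Set.mem_ofPred_eq, eq_sub_iff_add_eq, Pi.sub_apply, sub_eq_zero]
      at hshift
    simp only [Set.mem_ofPred_eq]
    refine (exists_congr fun N => and_congr_right fun hN => ?_).trans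
      (hshift.trans (forall₂_congr fun j hj => by rw [hbase j hj]))
    rw [hsdiff N hN, add_comm, eq_comm]

/-- If `κ` is a proper `r`-colouring of the crossing complex `Δ_P` (distinct
colours on consistent incomparable pairs), then on each face `C(I,M)` of
`⊞_P` the induced cubical colouring is injective on the vertex set
`{I \ N : N ⊆ M}`, and its image is the face of the cube `{0,1}^r` whose
coordinates in `κ(M)` vary and whose other coordinates agree with the colour
of `I \ M`. -/
theorem colouring_cubical_from_crossing (incons : P → P → Prop)
    (hirr : ∀ a, ¬ incons a a)
    (hsymm : ∀ a b, incons a b → incons b a)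
    (hup : ∀ a b a' b', incons a b → a ≤ a' → b ≤ b' → incons a' b')
    (r : ℕ) (κ : P → Fin r)
    (hκ : ∀ a b : P, a ≠ b → ¬ incons a b → ¬ a ≤ b → ¬ b ≤ a → κ a ≠ κ b)
    (I M : Finset P) (hface : IsFace incons I M) :
    (∀ N ⊆ M, ∀ N' ⊆ M,
        cubeColour κ (I \ N) = cubeColour κ (I \ N') → I \ N = I \ N') ∧
    ({w : Fin r → ZMod 2 | ∃ N ⊆ M, w = cubeColour κ (I \ N)} =
      {w : Fin r → ZMod 2 | ∀ j : Fin r,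
        j ∉ M.image κ → w j = cubeColour κ (I \ M) j}) :=
  colouring_cubical_from_crossing_general incons r κ hκ I M hface
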